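/- Let S be an AG-groupoid with left identity. Then the collection of all idempotent fuzzy left ideals of S forms a commutative monoid under the convolution product, with the constant fuzzy subset S as identity. -/

import Mathlib

/-!
Under convolution the fuzzy subsets of `S` form an AG-groupoid: the left invertive law lifts
from `S`, and the characteristic function of the left identity `e` is a left identity for
convolution. In an AG-groupoid with left identity the medial and paramedial laws make
idempotents commute, make their products idempotent, and make them multiply associatively.
Finally `f ≤ S ∘ f` for every fuzzy subset because `e * x = x`, so a fuzzy left ideal
satisfies `S ∘ f = f`, and `S ∘ (f ∘ g) = f ∘ (S ∘ g) ≤ f ∘ g` by left commutativity.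
-/

open unitInterval

instance : Fact ((0:ℝ) ≤ 1) := ⟨zero_le_one⟩

noncomputable def conv {S : Type*} [Mul S] (f g : S → I) : S → I :=
  fun x => ⨆ p : {p : S × S // p.1 * p.2 = x}, f p.1.1 ⊓ g p.1.2

section AGGroupoid

variable {M : Type*} {μ : M → M → M}

def IsLeftInvertive (μ : M → M → M) : Prop :=
  ∀ a b c, μ (μ a b) c = μ (μ c b) a

namespace IsLeftInvertive

theorem medial (hμ : IsLeftInvertive μ) (a b c d : M) :
    μ (μ a b) (μ c d) = μ (μ a c) (μ b d) := by
  rw [hμ, hμ c, ← hμ]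

variable {e : M}

theorem left_comm (hμ : IsLeftInvertive μ) (he : ∀ x, μ e x = x) (a b c : M) :
    μ a (μ b c) = μ b (μ a c) := by
  simpa only [he] using hμ.medial e a b c

theorem paramedial (hμ : IsLeftInvertive μ) (he : ∀ x, μ e x = x) (a b c d : M) :
    μ (μ a b) (μ c d) = μ (μ d c) (μ b a) := by
  have hcd : μ (μ d c) e = μ c d := by rw [hμ, he]
  have hab : μ (μ a b) e = μ b a := by rw [hμ, he]
  rw [← hcd, hμ.left_comm he, hab]

variable {a b c : M}

theorem comm_of_idem (hμ : IsLeftInvertive μ) (he : ∀ x, μ e x = x)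
    (ha : μ a a = a) (hb : μ b b = b) : μ a b = μ b a := by
  rw [← ha, ← hb, hμ.paramedial he, ha, hb]

theorem idem_of_idem (hμ : IsLeftInvertive μ) (ha : μ a a = a) (hb : μ b b = b) :
    μ (μ a b) (μ a b) = μ a b := by
  rw [hμ.medial, ha, hb]

theorem assoc_of_idem (hμ : IsLeftInvertive μ) (he : ∀ x, μ e x = x)
    (ha : μ a a = a) (hb : μ b b = b) (hc : μ c c = c) :
    μ (μ a b) c = μ a (μ b c) := by
  rw [hμ.comm_of_idem he (hμ.idem_of_idem ha hb) hc, hμ.left_comm he,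
    hμ.comm_of_idem he hc hb]

end IsLeftInvertive

end AGGroupoid

section Convolution

variable {S : Type*} [Mul S]

theorem conv_le {f g h : S → I} (H : ∀ y z, f y ⊓ g z ≤ h (y * z)) : conv f g ≤ h := by
  intro x
  apply iSup_le
  rintro ⟨⟨y, z⟩, rfl⟩
  exact H y z

theorem le_conv (f g : S → I) (y z : S) : f y ⊓ g z ≤ conv f g (y * z) :=
  le_iSup (fun p : {p : S × S // p.1 * p.2 = y * z} => f p.1.1 ⊓ g p.1.2) ⟨(y, z), rfl⟩

theorem conv_mono {f f' g g' : S → I} (hf : f ≤ f') (hg : g ≤ g') : conv f g ≤ conv f' g' :=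
  conv_le fun y z => (inf_le_inf (hf y) (hg z)).trans (le_conv f' g' y z)

theorem conv_conv_le {f g h k : S → I} (H : ∀ u v z, f u ⊓ g v ⊓ h z ≤ k (u * v * z)) :
    conv (conv f g) h ≤ k := by
  refine conv_le fun y z => ?_
  change (⨆ p : {p : S × S // p.1 * p.2 = y}, f p.1.1 ⊓ g p.1.2) ⊓ h z ≤ k (y * z)
  rw [iSup_inf_eq]
  refine iSup_le ?_
  rintro ⟨⟨u, v⟩, rfl⟩
  exact H u v z

theorem le_conv_conv (f g h : S → I) (u v z : S) :
    f u ⊓ g v ⊓ h z ≤ conv (conv f g) h (u * v * z) :=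
  (inf_le_inf_right _ (le_conv f g u v)).trans (le_conv _ h (u * v) z)

theorem isLeftInvertive_conv (hli : ∀ a b c : S, a * b * c = c * b * a) :
    IsLeftInvertive (conv (S := S)) := by
  have key : ∀ f g h : S → I, conv (conv f g) h ≤ conv (conv h g) f := fun f g h =>
    conv_conv_le fun u v z => by
      rw [hli, inf_comm, inf_comm (f u), ← inf_assoc]
      exact le_conv_conv h g f z v u
  exact fun f g h => le_antisymm (key f g h) (key h g f)

noncomputable def singletonChar [DecidableEq S] (e : S) : S → I :=
  fun y => if y = e then 1 else 0

theorem singletonChar_conv [DecidableEq S] {e : S} (he : ∀ x, e * x = x) (f : S → I) :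
    conv (singletonChar e) f = f := by
  refine funext fun x => le_antisymm ?_ ?_
  · refine conv_le (fun y z => ?_) x
    by_cases hy : y = e
    · rw [hy, he]
      exact inf_le_right
    · simp [singletonChar, hy]
  · simpa only [singletonChar, if_pos, he, min_eq_right le_one']
      using le_conv (singletonChar e) f e x

theorem le_conv_one {e : S} (he : ∀ x, e * x = x) (f : S → I) : f ≤ conv (fun _ => 1) f := by
  intro x
  simpa only [he, min_eq_right le_one'] using le_conv (fun _ => 1) f e x

theorem conv_one_one {e : S} (he : ∀ x, e * x = x) :
    conv (fun _ : S => (1 : I)) (fun _ => 1) = fun _ => 1 :=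
  le_antisymm (conv_le fun _ _ => inf_le_left) (le_conv_one he _)

end Convolution

theorem stmt13 {S : Type*} [Mul S]
    (hli : ∀ a b c : S, (a * b) * c = (c * b) * a)
    (e : S) (he : ∀ x : S, e * x = x) :
    let one : S → I := fun _ => 1
    let P : (S → I) → Prop := fun f => conv one f ≤ f ∧ conv f f = f
    (∀ f g : S → I, P f → P g → P (conv f g)) ∧
    (∀ f g : S → I, P f → P g → conv f g = conv g f) ∧
    (∀ f g h : S → I, P f → P g → P h → conv (conv f g) h = conv f (conv g h)) ∧
    P one ∧
    (∀ f : S → I, P f → conv one f = f ∧ conv f one = f) := by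
  classical
  intro one P
  have hL := isLeftInvertive_conv hli
  have hε := singletonChar_conv he
  have one_conv : ∀ f, P f → conv one f = f := fun f hf => le_antisymm hf.1 (le_conv_one he f)
  have hcomm : ∀ f g, P f → P g → conv f g = conv g f := fun f g hf hg =>
    hL.comm_of_idem hε hf.2 hg.2
  have hone : P one := ⟨(conv_one_one he).le, conv_one_one he⟩
  refine ⟨fun f g hf hg => ⟨?_, hL.idem_of_idem hf.2 hg.2⟩, hcomm,
    fun f g h hf hg hh => hL.assoc_of_idem hε hf.2 hg.2 hh.2, hone,
    fun f hf => ⟨one_conv f hf, (hcomm f one hf hone).trans (one_conv f hf)⟩⟩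
  calc conv one (conv f g) = conv f (conv one g) := hL.left_comm hε one f g
    _ ≤ conv f g := conv_mono le_rfl hg.1
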